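/- Embed U_{n−1} in U_n as {u ∈ U_n : u_{ij} ≠ 0 for i ≠ j implies i < j < n}. Let μ ∈ n_{n−1}^* and let V^μ be the U_{n−1}-supermodule with basis {v_ν : ν ∈ U_{n−1}μ} and action u·v_ν = θ(ν(u^{−1}−1)) v_{uν}. Then the induced module Ind_{U_{n−1}}^{U_n}(V^μ) = ℂU_n ⊗_{ℂU_{n−1}} V^μ is isomorphic, as a ℂU_n-module, to the ℂ-vector space with basis {v_λ : λ ∈ n_n^*, λ|_{n_{n−1}} ∈ U_{n−1}μ} and U_n-action u·v_λ = θ(λ(u^{−1}−1)) v_{uλ}, where λ|_{n_{n−1}} denotes the restriction of λ to n_{n−1} and U_{n−1}μ is the left orbit of μ. -/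

import Mathlib

/-!
STATEMENT 14: Embed U_{n−1} in U_n as {u ∈ U_n : u_{ij} ≠ 0, i ≠ j ⟹ i < j < n}.
Let μ ∈ n_{n−1}^* and let V^μ be the U_{n−1}-supermodule with basis
{v_ν : ν ∈ U_{n−1}μ} and action u·v_ν = θ(ν(u⁻¹−1)) v_{uν}.  Then
Ind_{U_{n−1}}^{U_n}(V^μ) = ℂU_n ⊗_{ℂU_{n−1}} V^μ is isomorphic as a ℂU_n-module to
the ℂ-vector space with basis {v_λ : λ ∈ n_n^*, λ|_{n_{n−1}} ∈ U_{n−1}μ} and action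
u·v_λ = θ(λ(u⁻¹−1)) v_{uλ}.

Here the tensor product ℂU_n ⊗_{ℂU_{n−1}} V^μ is presented concretely as the quotient
of the free ℂ-vector space on pairs (g, ν) by the ℂU_{n−1}-balancing relations
(g·h, ν) − θ(ν(h⁻¹−1))·(g, h·ν)  (g ∈ U_n, h ∈ U_{n−1}, ν ∈ U_{n−1}μ), together with
the basis vectors (g, ν) with g ∉ U_n or ν ∉ U_{n−1}μ; U_n acts by u·(g, ν) = (u·g, ν).
The target has basis indexed by {λ : λ supported strictly above the diagonal and
λ|_{n_{n−1}} ∈ U_{n−1}μ}, realized as the space of ℂ-valued functions on that basis,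
and "isomorphic as ℂU_n-modules" is expressed by a ℂ-linear equivalence intertwining
the two U_n-actions.
-/

open scoped Classical

noncomputable section

def setFinset {α : Type*} [Fintype α] (S : Set α) : Finset α :=
  Finset.univ.filter (· ∈ S)

/-- The pattern group `U_P` of unipotent upper-triangular matrices supported on `P`. -/
def patternGroup (F : Type*) [Field F] {n : ℕ} (P : Fin n → Fin n → Prop) :
    Set (Matrix (Fin n) (Fin n) F) :=
  {u | (∀ i, u i i = 1) ∧ ∀ i j, i ≠ j → u i j ≠ 0 → P i j}
open Matrix

/-- The pairing `⟪a,b⟫ = Σ_{ij} a_{ij} b_{ij}`, identifying a matrix `a` with the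
linear functional `b ↦ ⟪a,b⟫`. -/
def pairF {F : Type*} [Field F] {n : ℕ} (a b : Matrix (Fin n) (Fin n) F) : F :=
  ∑ i, ∑ j, a i j * b i j

/-- Projection of a matrix onto the entries supported on `P` (the matrix model of
restricting a functional to `n_P`). -/
def dproj {F : Type*} [Field F] {n : ℕ} (P : Fin n → Fin n → Prop)
    (m : Matrix (Fin n) (Fin n) F) : Matrix (Fin n) (Fin n) F :=
  Matrix.of fun i j => if P i j then m i j else 0

/-- The left action `u·λ`, via `(uλ)(x−1) = λ(u⁻¹(x−1))`, in the matrix model: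
`uλ = proj_P((u⁻¹)ᵀ λ)`. -/
def lact {F : Type*} [Field F] {n : ℕ} (P : Fin n → Fin n → Prop)
    (u lam : Matrix (Fin n) (Fin n) F) : Matrix (Fin n) (Fin n) F :=
  dproj P ((Ring.inverse u)ᵀ * lam)

/-- The right action `λ·v`, via `(λv)(x−1) = λ((x−1)v⁻¹)`:  `λv = proj_P(λ (v⁻¹)ᵀ)`. -/
def ract {F : Type*} [Field F] {n : ℕ} (P : Fin n → Fin n → Prop)
    (lam v : Matrix (Fin n) (Fin n) F) : Matrix (Fin n) (Fin n) F :=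
  dproj P (lam * (Ring.inverse v)ᵀ)

/-- The two-sided action `u·λ·v = proj_P((u⁻¹)ᵀ λ (v⁻¹)ᵀ)`. -/
def biact {F : Type*} [Field F] {n : ℕ} (P : Fin n → Fin n → Prop)
    (u lam v : Matrix (Fin n) (Fin n) F) : Matrix (Fin n) (Fin n) F :=
  dproj P ((Ring.inverse u)ᵀ * lam * (Ring.inverse v)ᵀ)

/-- The left orbit `U_P·λ`. -/
def leftOrbit (F : Type*) [Field F] {n : ℕ} (P : Fin n → Fin n → Prop)
    (lam : Matrix (Fin n) (Fin n) F) : Set (Matrix (Fin n) (Fin n) F) :=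
  {m | ∃ u ∈ patternGroup F P, m = lact P u lam}

/-- The right orbit `λ·U_P`. -/
def rightOrbit (F : Type*) [Field F] {n : ℕ} (P : Fin n → Fin n → Prop)
    (lam : Matrix (Fin n) (Fin n) F) : Set (Matrix (Fin n) (Fin n) F) :=
  {m | ∃ v ∈ patternGroup F P, m = ract P lam v}

/-- The two-sided orbit `U_P·λ·U_P`. -/
def biOrbit (F : Type*) [Field F] {n : ℕ} (P : Fin n → Fin n → Prop)
    (lam : Matrix (Fin n) (Fin n) F) : Set (Matrix (Fin n) (Fin n) F) :=
  {m | ∃ u ∈ patternGroup F P, ∃ v ∈ patternGroup F P, m = biact P u lam v}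

/-- The supercharacter
`χ^λ(u) = (|U_P λ|/|U_P λ U_P|) Σ_{μ ∈ U_P(−λ)U_P} θ(μ(u−1))`. -/
def superchar {F : Type*} [Field F] [Fintype F] {n : ℕ} (P : Fin n → Fin n → Prop)
    (θ : F → ℂ) (lam : Matrix (Fin n) (Fin n) F) (u : Matrix (Fin n) (Fin n) F) : ℂ :=
  (((setFinset (leftOrbit F P lam)).card : ℂ) / ((setFinset (biOrbit F P lam)).card : ℂ)) *
    ∑ ν ∈ setFinset (biOrbit F P (-lam)), θ (pairF ν (u - 1))

variable {F : Type*} [Field F] [Fintype F] {n : ℕ}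

/-- The subgroup `U_{n−1} ⊆ U_n` (1-based condition `i < j < n`). -/
def Psub (n : ℕ) : Fin n → Fin n → Prop := fun i j => i < j ∧ (j : ℕ) + 1 < n

/-- The set indexing the basis of the target module: functionals `λ ∈ n_n^*` whose
restriction to `n_{n−1}` lies in the orbit `U_{n−1}μ`. -/
def TSet (F : Type*) [Field F] [Fintype F] (n : ℕ) (mu : Matrix (Fin n) (Fin n) F) :
    Set (Matrix (Fin n) (Fin n) F) :=
  {lam | (∀ i j, lam i j ≠ 0 → i < j) ∧ dproj (Psub n) lam ∈ leftOrbit F (Psub n) mu}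

/-- The free ℂ-vector space on pairs `(g, ν)` of matrices. -/
abbrev FreeW (F : Type*) [Field F] (n : ℕ) :=
  (Matrix (Fin n) (Fin n) F × Matrix (Fin n) (Fin n) F) →₀ ℂ

/-- The submodule of balancing relations presenting `ℂU_n ⊗_{ℂU_{n−1}} V^μ`:
`(g·h, ν) − θ(ν(h⁻¹−1))·(g, h·ν)`, together with the irrelevant basis vectors. -/
def RelMod (F : Type*) [Field F] [Fintype F] (n : ℕ) (θ : F → ℂ)
    (mu : Matrix (Fin n) (Fin n) F) : Submodule ℂ (FreeW F n) :=
  Submodule.span ℂ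
    ({w | ∃ g ∈ patternGroup F (fun i j : Fin n => i < j),
        ∃ h ∈ patternGroup F (Psub n), ∃ ν ∈ leftOrbit F (Psub n) mu,
          w = Finsupp.single (g * h, ν) 1 -
              θ (pairF ν (Ring.inverse h - 1)) • Finsupp.single (g, lact (Psub n) h ν) 1} ∪
     {w | ∃ p : Matrix (Fin n) (Fin n) F × Matrix (Fin n) (Fin n) F,
        ¬ (p.1 ∈ patternGroup F (fun i j : Fin n => i < j) ∧
            p.2 ∈ leftOrbit F (Psub n) mu) ∧ w = Finsupp.single p 1})

/-- The induced module `ℂU_n ⊗_{ℂU_{n−1}} V^μ`, presented as a quotient of the free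
vector space on pairs. -/
abbrev IndMod (F : Type*) [Field F] [Fintype F] (n : ℕ) (θ : F → ℂ)
    (mu : Matrix (Fin n) (Fin n) F) :=
  FreeW F n ⧸ RelMod F n θ mu

/-- The action of `u ∈ U_n` on the free vector space on pairs: `u·(g, ν) = (u·g, ν)`. -/
def freeAct (F : Type*) [Field F] [Fintype F] (n : ℕ) (u : Matrix (Fin n) (Fin n) F) :
    FreeW F n →ₗ[ℂ] FreeW F n :=
  Finsupp.lmapDomain ℂ ℂ (fun p => (u * p.1, p.2))

/-- The action of `u ∈ U_n` on the target space with basis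
`{v_λ : λ ∈ n_n^*, λ|_{n_{n−1}} ∈ U_{n−1}μ}`, i.e. `u·v_λ = θ(λ(u⁻¹−1)) v_{uλ}`,
written in coordinates. -/
def targetAct (F : Type*) [Field F] [Fintype F] (n : ℕ) (θ : F → ℂ)
    (mu : Matrix (Fin n) (Fin n) F) (u : Matrix (Fin n) (Fin n) F)
    (f : {lam // lam ∈ TSet F n mu} → ℂ) : {lam // lam ∈ TSet F n mu} → ℂ :=
  fun lam' => ∑ lam : {lam // lam ∈ TSet F n mu},
    if lact (fun i j : Fin n => i < j) u lam.val = lam'.val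
    then θ (pairF lam.val (Ring.inverse u - 1)) * f lam else 0

/-!
The map `g ⊗ v_ν ↦ g · ∑_{λ|_{n_{n-1}} = ν} v_λ` kills the balancing relations, because
`h ∈ U_{n-1}` moves the sums `∑_{λ|=ν} v_λ` exactly as it moves the `v_ν`; it is
`U_n`-equivariant by construction. It is onto: a unipotent `a_m` supported on the last column
acts on `v_λ` by the scalar `θ(-λ(m))`, so summing `θ(λ(m)) a_m ⊗ v_ν` over all `m` isolates a
single `v_λ` by orthogonality of characters. Conversely `U_n = A · U_{n-1}` with `A` the
last-column group, so the induced module is spanned by the classes `a_λ ⊗ v_{λ|_{n_{n-1}}}`, one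
for each `λ` of the target basis. Hence the dimensions agree and the surjection is bijective.
-/

def patternSpace (F : Type*) [Field F] {n : ℕ} (P : Fin n → Fin n → Prop) :
    Submodule F (Matrix (Fin n) (Fin n) F) where
  carrier := {m | ∀ i j, m i j ≠ 0 → P i j}
  add_mem' {a b} ha hb i j h := by
    by_contra hP
    exact h (by simp [Not.imp_symm (ha i j) hP, Not.imp_symm (hb i j) hP])
  zero_mem' i j h := (h rfl).elim
  smul_mem' c m hm i j h := hm i j (right_ne_zero_of_mul h)

section PatternSpace

variable {F : Type*} [Field F] {n : ℕ} {P Q R : Fin n → Fin n → Prop}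
  {a b m : Matrix (Fin n) (Fin n) F}

lemma apply_eq_zero_of_mem_patternSpace (hm : m ∈ patternSpace F P) {i j : Fin n}
    (h : ¬ P i j) : m i j = 0 :=
  Not.imp_symm (hm i j) h

lemma patternSpace_mono (h : ∀ ⦃i j⦄, P i j → Q i j) :
    patternSpace F P ≤ patternSpace F Q :=
  fun _ hm i j hij => h (hm i j hij)

lemma eq_zero_of_mem_patternSpace (h : ∀ i j, ¬ P i j) (hm : m ∈ patternSpace F P) :
    m = 0 := by
  ext i j
  exact apply_eq_zero_of_mem_patternSpace hm (h i j)

lemma transpose_mem_patternSpace (hm : m ∈ patternSpace F P) :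
    mᵀ ∈ patternSpace F (fun i j => P j i) :=
  fun i j h => hm j i h

lemma mul_mem_patternSpace (hPQR : ∀ ⦃i k j⦄, P i k → Q k j → R i j)
    (ha : a ∈ patternSpace F P) (hb : b ∈ patternSpace F Q) : a * b ∈ patternSpace F R := by
  intro i j h
  rw [Matrix.mul_apply] at h
  obtain ⟨k, -, hk⟩ := Finset.exists_ne_zero_of_sum_ne_zero h
  exact hPQR (ha _ _ (left_ne_zero_of_mul hk)) (hb _ _ (right_ne_zero_of_mul hk))

lemma pow_succ_mem_patternSpace (htrans : ∀ ⦃i k j⦄, P i k → P k j → P i j)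
    (hm : m ∈ patternSpace F P) (k : ℕ) : m ^ (k + 1) ∈ patternSpace F P := by
  induction k with
  | zero => simpa using hm
  | succ k ih => rw [pow_succ]; exact mul_mem_patternSpace htrans ih hm

lemma pow_eq_zero_of_mem_patternSpace (hlt : ∀ ⦃i j⦄, P i j → i < j)
    (hm : m ∈ patternSpace F P) : m ^ n = 0 := by
  have key : ∀ k, m ^ k ∈ patternSpace F (fun i j : Fin n => (i : ℕ) + k ≤ j) := by
    intro k
    induction k with
    | zero =>
      intro i j h
      by_contra hij
      exact h (Matrix.one_apply_ne (fun e => hij (by simp [e])))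
    | succ k ih =>
      rw [pow_succ]
      refine mul_mem_patternSpace (fun i l j hil hlj => ?_) ih hm
      have := Fin.lt_def.1 (hlt hlj)
      omega
  exact eq_zero_of_mem_patternSpace (fun i j h => by omega) (key n)

lemma dproj_apply (m : Matrix (Fin n) (Fin n) F) (i j : Fin n) :
    dproj P m i j = if P i j then m i j else 0 := rfl

lemma dproj_mem_patternSpace (m : Matrix (Fin n) (Fin n) F) : dproj P m ∈ patternSpace F P := by
  intro i j h
  by_contra hP
  simp [dproj_apply, hP] at h

lemma dproj_eq_self (hm : m ∈ patternSpace F P) : dproj P m = m := by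
  ext i j
  by_cases hP : P i j
  · simp [dproj_apply, hP]
  · simp [dproj_apply, hP, apply_eq_zero_of_mem_patternSpace hm hP]

lemma dproj_eq_zero (hm : m ∈ patternSpace F R) (h : ∀ ⦃i j⦄, P i j → ¬ R i j) :
    dproj P m = 0 := by
  ext i j
  by_cases hP : P i j
  · simp [dproj_apply, hP, apply_eq_zero_of_mem_patternSpace hm (h hP)]
  · simp [dproj_apply, hP]

lemma dproj_add (a b : Matrix (Fin n) (Fin n) F) : dproj P (a + b) = dproj P a + dproj P b := by
  ext i j
  by_cases hP : P i j <;> simp [dproj_apply, hP]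

lemma dproj_neg (a : Matrix (Fin n) (Fin n) F) : dproj P (-a) = -dproj P a := by
  ext i j
  by_cases hP : P i j <;> simp [dproj_apply, hP]

lemma dproj_dproj (h : ∀ ⦃i j⦄, Q i j → P i j) (m : Matrix (Fin n) (Fin n) F) :
    dproj Q (dproj P m) = dproj Q m := by
  ext i j
  by_cases hQ : Q i j
  · simp [dproj_apply, hQ, h hQ]
  · simp [dproj_apply, hQ]

lemma dproj_mul_dproj (hQP : ∀ ⦃i k j⦄, Q i k → P i j → P k j)
    (ha : a ∈ patternSpace F Q) (m : Matrix (Fin n) (Fin n) F) :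
    dproj P (a * dproj P m) = dproj P (a * m) := by
  ext i j
  by_cases hP : P i j
  · simp only [dproj_apply, hP, if_true, Matrix.mul_apply]
    refine Finset.sum_congr rfl fun k _ => ?_
    by_cases hk : a i k = 0
    · simp [hk]
    · simp [hQP (ha i k hk) hP]
  · simp [dproj_apply, hP]

end PatternSpace

section PatternGroup

variable {F : Type*} [Field F] {n : ℕ} {P Q : Fin n → Fin n → Prop}
  {u v : Matrix (Fin n) (Fin n) F}

lemma mem_patternGroup_iff (hirr : ∀ i, ¬ P i i) :
    u ∈ patternGroup F P ↔ u - 1 ∈ patternSpace F P := by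
  constructor
  · rintro ⟨hdiag, hoff⟩ i j h
    by_cases hij : i = j
    · subst hij
      simp [hdiag] at h
    · exact hoff i j hij (by simpa [Matrix.one_apply_ne hij] using h)
  · intro hu
    refine ⟨fun i => ?_, fun i j hij h => hu i j (by simpa [Matrix.one_apply_ne hij] using h)⟩
    simpa [sub_eq_zero] using apply_eq_zero_of_mem_patternSpace hu (hirr i)

lemma one_sub_mem_patternSpace (hirr : ∀ i, ¬ P i i) (hu : u ∈ patternGroup F P) :
    1 - u ∈ patternSpace F P := by
  rw [← neg_sub]
  exact neg_mem ((mem_patternGroup_iff hirr).1 hu)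

lemma patternGroup_mono (h : ∀ ⦃i j⦄, P i j → Q i j) (hu : u ∈ patternGroup F P) :
    u ∈ patternGroup F Q :=
  ⟨hu.1, fun i j hij h0 => h (hu.2 i j hij h0)⟩

lemma mul_mem_patternGroup (hlt : ∀ ⦃i j⦄, P i j → i < j)
    (htrans : ∀ ⦃i k j⦄, P i k → P k j → P i j)
    (hu : u ∈ patternGroup F P) (hv : v ∈ patternGroup F P) : u * v ∈ patternGroup F P := by
  have hirr : ∀ i, ¬ P i i := fun i h => lt_irrefl i (hlt h)
  rw [mem_patternGroup_iff hirr] at hu hv ⊢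
  have : u * v - 1 = (u - 1) * (v - 1) + (u - 1) + (v - 1) := by noncomm_ring
  rw [this]
  exact add_mem (add_mem (mul_mem_patternSpace htrans hu hv) hu) hv

lemma geom_sum_mul_eq_one (hlt : ∀ ⦃i j⦄, P i j → i < j) (hu : u ∈ patternGroup F P) :
    (∑ k ∈ Finset.range (n + 1), (1 - u) ^ k) * u = 1 := by
  have hx := one_sub_mem_patternSpace (fun i h => lt_irrefl i (hlt h)) hu
  have := geom_sum_mul_neg (1 - u) (n + 1)
  rwa [sub_sub_cancel, pow_succ, pow_eq_zero_of_mem_patternSpace hlt hx, zero_mul,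
    sub_zero] at this

lemma isUnit_of_mem_patternGroup (hlt : ∀ ⦃i j⦄, P i j → i < j)
    (hu : u ∈ patternGroup F P) : IsUnit u :=
  (Matrix.isUnit_iff_isUnit_det u).2
    (Matrix.isUnit_det_of_left_inverse (geom_sum_mul_eq_one hlt hu))

lemma inverse_mem_patternGroup (hlt : ∀ ⦃i j⦄, P i j → i < j)
    (htrans : ∀ ⦃i k j⦄, P i k → P k j → P i j)
    (hu : u ∈ patternGroup F P) : Ring.inverse u ∈ patternGroup F P := by
  have hirr : ∀ i, ¬ P i i := fun i h => lt_irrefl i (hlt h)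
  have hx := one_sub_mem_patternSpace hirr hu
  rw [mem_patternGroup_iff hirr, ← Matrix.nonsing_inv_eq_ringInverse,
    Matrix.inv_eq_left_inv (geom_sum_mul_eq_one hlt hu), Finset.sum_range_succ', pow_zero,
    add_sub_cancel_right]
  exact Submodule.sum_mem _ fun k _ => pow_succ_mem_patternSpace htrans hx k

lemma isUnit_of_mem_upper (hu : u ∈ patternGroup F (· < ·)) : IsUnit u :=
  isUnit_of_mem_patternGroup (fun _ _ h => h) hu

lemma mul_mem_upper (hu : u ∈ patternGroup F (· < ·)) (hv : v ∈ patternGroup F (· < ·)) :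
    u * v ∈ patternGroup F (· < ·) :=
  mul_mem_patternGroup (fun _ _ h => h) (fun _ _ _ => lt_trans) hu hv

lemma inverse_mem_upper (hu : u ∈ patternGroup F (· < ·)) :
    Ring.inverse u ∈ patternGroup F (· < ·) :=
  inverse_mem_patternGroup (fun _ _ h => h) (fun _ _ _ => lt_trans) hu

lemma mul_mem_upper_iff (hu : u ∈ patternGroup F (· < ·)) {g : Matrix (Fin n) (Fin n) F} :
    u * g ∈ patternGroup F (· < ·) ↔ g ∈ patternGroup F (· < ·) := by
  refine ⟨fun h => ?_, mul_mem_upper hu⟩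
  rw [← Ring.inverse_mul_cancel_left u g (isUnit_of_mem_upper hu)]
  exact mul_mem_upper (inverse_mem_upper hu) h

end PatternGroup

section LeftAction

variable {F : Type*} [Field F] {n : ℕ} {P Q : Fin n → Fin n → Prop}
  {u m : Matrix (Fin n) (Fin n) F}

lemma pairF_dproj (a m : Matrix (Fin n) (Fin n) F) :
    pairF (dproj P a) m = pairF a (dproj P m) := by
  simp only [pairF, dproj_apply]
  refine Finset.sum_congr rfl fun i _ => Finset.sum_congr rfl fun j _ => ?_
  split_ifs <;> simp

lemma pairF_eq_trace (a m : Matrix (Fin n) (Fin n) F) : pairF a m = Matrix.trace (aᵀ * m) := by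
  simp only [pairF, Matrix.trace, Matrix.diag, Matrix.mul_apply, Matrix.transpose_apply]
  exact Finset.sum_comm

lemma pairF_transpose_mul (A a m : Matrix (Fin n) (Fin n) F) :
    pairF (Aᵀ * a) m = pairF a (A * m) := by
  rw [pairF_eq_trace, pairF_eq_trace, Matrix.transpose_mul, Matrix.transpose_transpose,
    Matrix.mul_assoc]

lemma pairF_add_right (a m₁ m₂ : Matrix (Fin n) (Fin n) F) :
    pairF a (m₁ + m₂) = pairF a m₁ + pairF a m₂ := by
  simp only [pairF, Matrix.add_apply, mul_add, Finset.sum_add_distrib]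

lemma pairF_neg_right (a m : Matrix (Fin n) (Fin n) F) : pairF a (-m) = -pairF a m := by
  simp only [pairF, Matrix.neg_apply, mul_neg, Finset.sum_neg_distrib]

lemma pairF_sub_left (a b m : Matrix (Fin n) (Fin n) F) :
    pairF (a - b) m = pairF a m - pairF b m := by
  simp only [pairF, Matrix.sub_apply, sub_mul, Finset.sum_sub_distrib]

lemma pairF_single (a : Matrix (Fin n) (Fin n) F) (i j : Fin n) (c : F) :
    pairF a (Matrix.single i j c) = a i j * c := by
  simp [pairF, Matrix.single_apply, ite_and]

lemma pairF_lact (hm : m ∈ patternSpace F P) (u l : Matrix (Fin n) (Fin n) F) :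
    pairF (lact P u l) m = pairF l (Ring.inverse u * m) := by
  rw [lact, pairF_dproj, dproj_eq_self hm, pairF_transpose_mul]

lemma lt_of_le_left : ∀ ⦃i j k : Fin n⦄, i < j → k ≤ i → k < j :=
  fun _ _ _ => lt_of_lt_of_le'

lemma lact_one (l : Matrix (Fin n) (Fin n) F) : lact P 1 l = dproj P l := by
  rw [lact, Ring.inverse_one, Matrix.transpose_one, one_mul]

lemma dproj_lact (h : ∀ ⦃i j⦄, Q i j → P i j) (u l : Matrix (Fin n) (Fin n) F) :
    dproj Q (lact P u l) = lact Q u l :=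
  dproj_dproj h _

lemma mem_patternSpace_le_of_mem_upper (hu : u ∈ patternGroup F (· < ·)) :
    u ∈ patternSpace F (· ≤ ·) := by
  intro i j h
  by_cases hij : i = j
  · exact hij.le
  · exact (hu.2 i j hij h).le

lemma lact_dproj (hP : ∀ ⦃i j k⦄, P i j → k ≤ i → P k j)
    (hu : u ∈ patternGroup F (· < ·)) (l : Matrix (Fin n) (Fin n) F) :
    lact P u (dproj P l) = lact P u l := by
  exact dproj_mul_dproj (P := P) (Q := fun i k => k ≤ i) (fun _ _ _ hki hij => hP hij hki)
    (transpose_mem_patternSpace (P := (· ≤ ·))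
      (mem_patternSpace_le_of_mem_upper (inverse_mem_upper hu))) l

lemma lact_mul (hP : ∀ ⦃i j k⦄, P i j → k ≤ i → P k j)
    (hu : u ∈ patternGroup F (· < ·)) (v l : Matrix (Fin n) (Fin n) F) :
    lact P (u * v) l = lact P u (lact P v l) := by
  change _ = lact P u (dproj P _)
  rw [lact_dproj hP hu, lact, lact, Ring.inverse_mul (Or.inl (isUnit_of_mem_upper hu)),
    Matrix.transpose_mul, Matrix.mul_assoc]

lemma lact_lact_inverse (hP : ∀ ⦃i j k⦄, P i j → k ≤ i → P k j)
    (hu : u ∈ patternGroup F (· < ·)) (l : Matrix (Fin n) (Fin n) F) :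
    lact P u (lact P (Ring.inverse u) l) = dproj P l := by
  rw [← lact_mul hP hu, Ring.mul_inverse_cancel _ (isUnit_of_mem_upper hu), lact_one]

lemma lact_inverse_lact (hP : ∀ ⦃i j k⦄, P i j → k ≤ i → P k j)
    (hu : u ∈ patternGroup F (· < ·)) (l : Matrix (Fin n) (Fin n) F) :
    lact P (Ring.inverse u) (lact P u l) = dproj P l := by
  rw [← lact_mul hP (inverse_mem_upper hu),
    Ring.inverse_mul_cancel _ (isUnit_of_mem_upper hu), lact_one]

end LeftAction

section LastColumn

variable {F : Type*} [Field F] {n : ℕ} {u h l ν mu : Matrix (Fin n) (Fin n) F}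

lemma Psub_lt : ∀ ⦃i j : Fin n⦄, Psub n i j → i < j := fun _ _ h => h.1

lemma Psub_trans : ∀ ⦃i k j : Fin n⦄, Psub n i k → Psub n k j → Psub n i j :=
  fun _ _ _ h₁ h₂ => ⟨h₁.1.trans h₂.1, h₂.2⟩

lemma Psub_of_le : ∀ ⦃i j k : Fin n⦄, Psub n i j → k ≤ i → Psub n k j :=
  fun _ _ _ h hk => ⟨hk.trans_lt h.1, h.2⟩

lemma succ_lt_of_lt : ∀ ⦃i j : Fin n⦄, i < j → (i : ℕ) + 1 < n :=
  fun _ j h => by have := Fin.lt_def.1 h; have := j.isLt; omega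

/-- The entries `(i, n - 1)` with `i < n - 1`: the coordinates of `n_n` missing from `n_{n-1}`. -/
def Plast (n : ℕ) : Fin n → Fin n → Prop := fun i j => i < j ∧ (j : ℕ) + 1 = n

def lastColUnip (m : Matrix (Fin n) (Fin n) F) : Matrix (Fin n) (Fin n) F :=
  1 + dproj (Plast n) m

lemma Plast_not_Psub : ∀ ⦃i j : Fin n⦄, Plast n i j → ¬ Psub n i j :=
  fun _ _ h h' => by have := h.2; have := h'.2; omega

lemma dproj_Psub_add_dproj_Plast (m : Matrix (Fin n) (Fin n) F) :
    dproj (Psub n) m + dproj (Plast n) m = dproj (· < ·) m := by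
  ext i j
  simp only [Matrix.add_apply, dproj_apply, Psub, Plast]
  have := j.isLt
  by_cases hij : i < j <;> by_cases hj : (j : ℕ) + 1 = n <;> simp [hij, hj]; omega

lemma dproj_Plast_mul_eq_zero (m : Matrix (Fin n) (Fin n) F)
    (hl : l ∈ patternSpace F (· < ·)) : dproj (Plast n) m * l = 0 :=
  eq_zero_of_mem_patternSpace (P := fun _ _ => False) (fun _ _ h => h)
    (mul_mem_patternSpace (fun _ k j hik hkj => by have := j.isLt; have := hik.2; omega)
      (dproj_mem_patternSpace m) hl)

lemma dproj_Plast_mem (m : Matrix (Fin n) (Fin n) F) :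
    dproj (Plast n) m ∈ patternSpace F (· < ·) :=
  patternSpace_mono (fun _ _ h => h.1) (dproj_mem_patternSpace m)

lemma lastColUnip_mul_lastColUnip_neg (m : Matrix (Fin n) (Fin n) F) :
    lastColUnip m * lastColUnip (-m) = 1 := by
  rw [lastColUnip, lastColUnip, dproj_neg, add_mul, one_mul, mul_add, mul_one, mul_neg,
    dproj_Plast_mul_eq_zero m (dproj_Plast_mem m)]
  abel

lemma inverse_lastColUnip (m : Matrix (Fin n) (Fin n) F) :
    Ring.inverse (lastColUnip m) = lastColUnip (-m) := by
  rw [← Matrix.nonsing_inv_eq_ringInverse,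
    Matrix.inv_eq_right_inv (lastColUnip_mul_lastColUnip_neg m)]

lemma lastColUnip_mem (m : Matrix (Fin n) (Fin n) F) :
    lastColUnip m ∈ patternGroup F (· < ·) := by
  rw [mem_patternGroup_iff (fun i => lt_irrefl i), lastColUnip, add_sub_cancel_left]
  exact dproj_Plast_mem m

lemma lact_lastColUnip {P : Fin n → Fin n → Prop}
    (hP : ∀ ⦃i j⦄, P i j → (i : ℕ) + 1 < n) (m l : Matrix (Fin n) (Fin n) F) :
    lact P (lastColUnip m) l = dproj P l := by
  have hlast : (dproj (Plast n) (-m))ᵀ * l ∈ patternSpace F (fun i _ => (i : ℕ) + 1 = n) :=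
    mul_mem_patternSpace (Q := fun _ _ => True) (fun _ _ _ h _ => h.2)
      (transpose_mem_patternSpace (dproj_mem_patternSpace _)) (fun _ _ _ => trivial)
  rw [lact, inverse_lastColUnip, lastColUnip, Matrix.transpose_add, Matrix.transpose_one,
    Matrix.add_mul, Matrix.one_mul, dproj_add,
    dproj_eq_zero hlast (fun i j hij h => by have := hP hij; omega), add_zero]

lemma eq_lastColUnip_mul (hu : u ∈ patternGroup F (· < ·)) :
    ∃ h ∈ patternGroup F (Psub n), u = lastColUnip u * h := by
  refine ⟨lastColUnip (-u) * u, ?_, ?_⟩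
  · rw [mem_patternGroup_iff (fun i h => lt_irrefl i h.1)]
    have hu1 : u - 1 ∈ patternSpace F (· < ·) :=
      (mem_patternGroup_iff (fun i => lt_irrefl i)).1 hu
    have hPlast : dproj (Plast n) (u - 1) = dproj (Plast n) u := by
      ext i j
      by_cases hij : Plast n i j
      · simp [dproj_apply, hij, Matrix.one_apply_ne hij.1.ne]
      · simp [dproj_apply, hij]
    have hsplit : u - 1 = dproj (Psub n) (u - 1) + dproj (Plast n) u := by
      rw [← hPlast, dproj_Psub_add_dproj_Plast, dproj_eq_self hu1]
    have hcalc : lastColUnip (-u) * u - 1 =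
        (u - 1) - dproj (Plast n) u - dproj (Plast n) u * (u - 1) := by
      rw [lastColUnip, dproj_neg]
      noncomm_ring
    rw [hcalc, dproj_Plast_mul_eq_zero u hu1, sub_zero, hsplit, add_sub_cancel_right]
    exact dproj_mem_patternSpace _
  · rw [← Matrix.mul_assoc, lastColUnip_mul_lastColUnip_neg, Matrix.one_mul]

lemma mem_patternSpace_of_mem_leftOrbit (hν : ν ∈ leftOrbit F (Psub n) mu) :
    ν ∈ patternSpace F (Psub n) := by
  obtain ⟨u, -, rfl⟩ := hν
  exact dproj_mem_patternSpace _

lemma lact_mem_leftOrbit (hh : h ∈ patternGroup F (Psub n))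
    (hν : ν ∈ leftOrbit F (Psub n) mu) :
    lact (Psub n) h ν ∈ leftOrbit F (Psub n) mu := by
  obtain ⟨w, hw, rfl⟩ := hν
  exact ⟨h * w, mul_mem_patternGroup Psub_lt Psub_trans hh hw,
    (lact_mul Psub_of_le (patternGroup_mono Psub_lt hh) w mu).symm⟩

lemma lact_mem_TSet [Fintype F] (hu : u ∈ patternGroup F (· < ·)) (hl : l ∈ TSet F n mu) :
    lact (· < ·) u l ∈ TSet F n mu := by
  refine ⟨dproj_mem_patternSpace _, ?_⟩
  obtain ⟨h, hh, hu_eq⟩ := eq_lastColUnip_mul hu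
  rw [dproj_lact Psub_lt, hu_eq, lact_mul Psub_of_le (lastColUnip_mem u),
    lact_lastColUnip (fun _ _ h => succ_lt_of_lt h.1), dproj_lact (fun _ _ h => h),
    ← lact_dproj Psub_of_le (patternGroup_mono Psub_lt hh)]
  exact lact_mem_leftOrbit hh hl.2

lemma dproj_Psub_add_dproj_Plast_of_mem (hν : ν ∈ patternSpace F (Psub n))
    (m : Matrix (Fin n) (Fin n) F) : dproj (Psub n) (ν + dproj (Plast n) m) = ν := by
  rw [dproj_add, dproj_eq_self hν,
    dproj_eq_zero (dproj_mem_patternSpace m) (fun _ _ h h' => Plast_not_Psub h' h), add_zero]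

lemma dproj_Plast_add_dproj_Plast_of_mem (hν : ν ∈ patternSpace F (Psub n))
    (m : Matrix (Fin n) (Fin n) F) :
    dproj (Plast n) (ν + dproj (Plast n) m) = dproj (Plast n) m := by
  rw [dproj_add, dproj_eq_zero hν Plast_not_Psub, zero_add, dproj_dproj (fun _ _ h => h)]

lemma add_dproj_Plast_mem_TSet [Fintype F] (hν : ν ∈ leftOrbit F (Psub n) mu)
    (m : Matrix (Fin n) (Fin n) F) : ν + dproj (Plast n) m ∈ TSet F n mu := by
  have hν' := mem_patternSpace_of_mem_leftOrbit hν
  refine ⟨add_mem (patternSpace_mono Psub_lt hν') (dproj_Plast_mem m), ?_⟩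
  rw [dproj_Psub_add_dproj_Plast_of_mem hν']
  exact hν

lemma TSet_ext [Fintype F] {l l' : Matrix (Fin n) (Fin n) F} (hl : l ∈ TSet F n mu)
    (hl' : l' ∈ TSet F n mu) (hsub : dproj (Psub n) l = dproj (Psub n) l')
    (hlast : dproj (Plast n) l = dproj (Plast n) l') : l = l' := by
  rw [← dproj_eq_self hl.1, ← dproj_eq_self hl'.1, ← dproj_Psub_add_dproj_Plast,
    ← dproj_Psub_add_dproj_Plast, hsub, hlast]

end LastColumn

section Character

variable {F : Type*} [Field F] {n : ℕ} {θ : F → ℂ}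

lemma theta_zero (hθadd : ∀ a b, θ (a + b) = θ a * θ b) (hθne : ∀ a, θ a ≠ 0) :
    θ 0 = 1 :=
  (mul_eq_left₀ (hθne 0)).1 (by rw [← hθadd, add_zero])

lemma sum_theta_pairF [Fintype F] (hθadd : ∀ a b, θ (a + b) = θ a * θ b) (hθ0 : θ 0 = 1)
    (hθnt : ∃ a, θ a ≠ 1) (a : Matrix (Fin n) (Fin n) F) :
    ∑ m, θ (pairF a m) =
      if a = 0 then (Fintype.card (Matrix (Fin n) (Fin n) F) : ℂ) else 0 := by
  let ψ : AddChar (Matrix (Fin n) (Fin n) F) ℂ :=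
    { toFun := fun m => θ (pairF a m)
      map_zero_eq_one' := by simpa [pairF] using hθ0
      map_add_eq_mul' := fun x y => by rw [pairF_add_right, hθadd] }
  have hψ : ψ = 0 ↔ a = 0 := by
    constructor
    · intro h
      by_contra ha
      obtain ⟨i, j, hij⟩ : ∃ i j, a i j ≠ 0 := by
        by_contra! h0
        exact ha (Matrix.ext h0)
      obtain ⟨t, ht⟩ := hθnt
      apply ht
      have := DFunLike.congr_fun h (Matrix.single i j ((a i j)⁻¹ * t))
      rwa [AddChar.zero_apply, AddChar.coe_mk, pairF_single, mul_inv_cancel_left₀ hij] at this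
    · rintro rfl
      ext m
      simpa [ψ, pairF] using hθ0
  simp_rw [← hψ]
  exact ψ.sum_eq_ite

end Character

section TargetModule

variable {F : Type*} [Field F] [Fintype F] {n : ℕ} {θ : F → ℂ}
  {mu u v h ν : Matrix (Fin n) (Fin n) F}

def targetActLinear (θ : F → ℂ) (mu u : Matrix (Fin n) (Fin n) F) :
    ({lam // lam ∈ TSet F n mu} → ℂ) →ₗ[ℂ] ({lam // lam ∈ TSet F n mu} → ℂ) where
  toFun := targetAct F n θ mu u
  map_add' f g := by
    ext l'
    simp only [targetAct, Pi.add_apply, ← Finset.sum_add_distrib]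
    exact Finset.sum_congr rfl fun l _ => by split_ifs <;> ring
  map_smul' c f := by
    ext l'
    simp only [targetAct, Pi.smul_apply, smul_eq_mul, RingHom.id_apply, Finset.mul_sum]
    exact Finset.sum_congr rfl fun l _ => by split_ifs <;> ring

lemma targetAct_smul (c : ℂ) (f : {lam // lam ∈ TSet F n mu} → ℂ) :
    targetAct F n θ mu u (c • f) = c • targetAct F n θ mu u f :=
  (targetActLinear θ mu u).map_smul c f

/-- The coefficient `θ(λ(u⁻¹ - 1))` of `v_{uλ}` in `u · v_λ`, read off at `λ' = uλ`,
is `θ(λ'(1 - u))`. -/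
lemma targetAct_apply (hu : u ∈ patternGroup F (· < ·))
    (f : {lam // lam ∈ TSet F n mu} → ℂ) (l : {lam // lam ∈ TSet F n mu}) :
    targetAct F n θ mu u f l = θ (pairF l.1 (1 - u)) *
      f ⟨lact (· < ·) (Ring.inverse u) l.1, lact_mem_TSet (inverse_mem_upper hu) l.2⟩ := by
  have hinv := inverse_mem_upper hu
  rw [targetAct, Fintype.sum_eq_single ⟨_, lact_mem_TSet hinv l.2⟩]
  · rw [if_pos (by rw [lact_lact_inverse lt_of_le_left hu, dproj_eq_self l.2.1]),
      pairF_lact ((mem_patternGroup_iff fun i => lt_irrefl i).1 hinv),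
      Ring.inverse_inverse (isUnit_of_mem_upper hu), mul_sub, mul_one,
      Ring.mul_inverse_cancel _ (isUnit_of_mem_upper hu)]
  · intro l' hl'
    rw [if_neg]
    intro h
    refine hl' (Subtype.ext ?_)
    change l'.1 = lact _ _ l.1
    rw [← h, lact_inverse_lact lt_of_le_left hu, dproj_eq_self l'.2.1]

lemma targetAct_mul (hθadd : ∀ a b, θ (a + b) = θ a * θ b)
    (hu : u ∈ patternGroup F (· < ·)) (hv : v ∈ patternGroup F (· < ·))
    (f : {lam // lam ∈ TSet F n mu} → ℂ) :
    targetAct F n θ mu u (targetAct F n θ mu v f) = targetAct F n θ mu (u * v) f := by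
  have huv := mul_mem_upper hu hv
  have hvinv := inverse_mem_upper hv
  ext l
  rw [targetAct_apply hu, targetAct_apply hv, targetAct_apply huv, ← mul_assoc, ← hθadd,
    pairF_lact (one_sub_mem_patternSpace (fun i => lt_irrefl i) hv),
    Ring.inverse_inverse (isUnit_of_mem_upper hu), ← pairF_add_right]
  congr 2
  · noncomm_ring
  · refine Subtype.ext ?_
    change lact _ _ (lact _ _ l.1) = lact _ _ l.1
    rw [Ring.inverse_mul (Or.inl (isUnit_of_mem_upper hu)), lact_mul lt_of_le_left hvinv]

/-- `∑ v_λ` over the `λ` with `λ|_{n_{n-1}} = ν`. -/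
def extensionSum (mu ν : Matrix (Fin n) (Fin n) F) : {lam // lam ∈ TSet F n mu} → ℂ :=
  fun l => if dproj (Psub n) l.1 = ν then 1 else 0

lemma targetAct_extensionSum (hh : h ∈ patternGroup F (Psub n))
    (hν : ν ∈ leftOrbit F (Psub n) mu) :
    targetAct F n θ mu h (extensionSum mu ν) =
      θ (pairF ν (Ring.inverse h - 1)) • extensionSum mu (lact (Psub n) h ν) := by
  have hh' := patternGroup_mono Psub_lt hh
  have hν' := mem_patternSpace_of_mem_leftOrbit hν
  ext l
  have key : dproj (Psub n) (lact (· < ·) (Ring.inverse h) l.1) = ν ↔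
      dproj (Psub n) l.1 = lact (Psub n) h ν := by
    rw [dproj_lact Psub_lt, ← lact_dproj Psub_of_le (inverse_mem_upper hh')]
    constructor
    · rintro rfl
      rw [lact_lact_inverse Psub_of_le hh', dproj_dproj (fun _ _ h => h)]
    · intro e
      rw [e, lact_inverse_lact Psub_of_le hh', dproj_eq_self hν']
  rw [targetAct_apply hh', Pi.smul_apply, smul_eq_mul, extensionSum, extensionSum]
  by_cases hc : dproj (Psub n) l.1 = lact (Psub n) h ν
  · rw [if_pos (key.2 hc), if_pos hc, mul_one, mul_one]
    have h1 := one_sub_mem_patternSpace (fun i h => lt_irrefl i h.1) hh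
    rw [← dproj_eq_self h1, ← pairF_dproj, hc, pairF_lact h1, mul_sub, mul_one,
      Ring.inverse_mul_cancel _ (isUnit_of_mem_upper hh')]
  · rw [if_neg (mt key.1 hc), if_neg hc, mul_zero, mul_zero]

lemma targetAct_lastColUnip (m : Matrix (Fin n) (Fin n) F)
    (f : {lam // lam ∈ TSet F n mu} → ℂ) (l : {lam // lam ∈ TSet F n mu}) :
    targetAct F n θ mu (lastColUnip m) f l = θ (-pairF (dproj (Plast n) l.1) m) * f l := by
  have hsub : 1 - lastColUnip m = -dproj (Plast n) m := by
    rw [lastColUnip]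
    abel
  rw [targetAct_apply (lastColUnip_mem m), hsub, pairF_neg_right, pairF_dproj]
  congr 2
  refine Subtype.ext ?_
  change lact _ _ l.1 = l.1
  rw [inverse_lastColUnip, lact_lastColUnip succ_lt_of_lt, dproj_eq_self l.2.1]

end TargetModule

section InducedModule

variable {F : Type*} [Field F] [Fintype F] {n : ℕ} {θ : F → ℂ}
  {mu u : Matrix (Fin n) (Fin n) F}

/-- `g ⊗ v_ν ↦ g · ∑_{λ|_{n_{n-1}} = ν} v_λ`, on the generators of the free module. -/
def freeToTarget (θ : F → ℂ) (mu : Matrix (Fin n) (Fin n) F) :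
    FreeW F n →ₗ[ℂ] ({lam // lam ∈ TSet F n mu} → ℂ) :=
  Finsupp.linearCombination ℂ fun p =>
    if p.1 ∈ patternGroup F (· < ·) ∧ p.2 ∈ leftOrbit F (Psub n) mu
    then targetAct F n θ mu p.1 (extensionSum mu p.2) else 0

lemma freeToTarget_single (p : Matrix (Fin n) (Fin n) F × Matrix (Fin n) (Fin n) F) (c : ℂ) :
    freeToTarget θ mu (Finsupp.single p c) =
      c • if p.1 ∈ patternGroup F (· < ·) ∧ p.2 ∈ leftOrbit F (Psub n) mu
        then targetAct F n θ mu p.1 (extensionSum mu p.2) else 0 :=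
  Finsupp.linearCombination_single ℂ c p

lemma relMod_le_ker_freeToTarget (hθadd : ∀ a b, θ (a + b) = θ a * θ b) :
    RelMod F n θ mu ≤ LinearMap.ker (freeToTarget θ mu) := by
  rw [RelMod, Submodule.span_le]
  rintro w (⟨g, hg, h, hh, ν, hν, rfl⟩ | ⟨p, hp, rfl⟩)
  · have hh' := patternGroup_mono Psub_lt hh
    rw [SetLike.mem_coe, LinearMap.mem_ker, map_sub, map_smul, freeToTarget_single,
      freeToTarget_single, one_smul, one_smul, if_pos ⟨mul_mem_upper hg hh', hν⟩,
      if_pos ⟨hg, lact_mem_leftOrbit hh hν⟩, ← targetAct_mul hθadd hg hh',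
      targetAct_extensionSum hh hν, targetAct_smul, sub_self]
  · rw [SetLike.mem_coe, LinearMap.mem_ker, freeToTarget_single, if_neg hp, smul_zero]

lemma freeToTarget_freeAct (hθadd : ∀ a b, θ (a + b) = θ a * θ b)
    (hu : u ∈ patternGroup F (· < ·)) (w : FreeW F n) :
    freeToTarget θ mu (freeAct F n u w) = targetAct F n θ mu u (freeToTarget θ mu w) := by
  suffices (freeToTarget θ mu).comp (freeAct F n u) =
      (targetActLinear θ mu u).comp (freeToTarget θ mu) from LinearMap.congr_fun this w
  refine Finsupp.lhom_ext fun p c => ?_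
  rw [LinearMap.comp_apply, LinearMap.comp_apply, freeAct, Finsupp.lmapDomain_apply,
    Finsupp.mapDomain_single, freeToTarget_single, freeToTarget_single, map_smul]
  congr 1
  by_cases hp : p.1 ∈ patternGroup F (· < ·) ∧ p.2 ∈ leftOrbit F (Psub n) mu
  · rw [if_pos ⟨mul_mem_upper hu hp.1, hp.2⟩, if_pos hp]
    exact (targetAct_mul hθadd hu hp.1 _).symm
  · rw [if_neg (by rwa [mul_mem_upper_iff hu]), if_neg hp, map_zero]

lemma freeToTarget_single_lastColUnip {ν : Matrix (Fin n) (Fin n) F}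
    (hν : ν ∈ leftOrbit F (Psub n) mu) (m : Matrix (Fin n) (Fin n) F)
    (l : {lam // lam ∈ TSet F n mu}) :
    freeToTarget θ mu (Finsupp.single (lastColUnip m, ν) 1) l =
      θ (-pairF (dproj (Plast n) l.1) m) * extensionSum mu ν l := by
  rw [freeToTarget_single, one_smul, if_pos ⟨lastColUnip_mem m, hν⟩, targetAct_lastColUnip]

lemma freeToTarget_sum_lastColUnip (hθadd : ∀ a b, θ (a + b) = θ a * θ b) (hθ0 : θ 0 = 1)
    (hθnt : ∃ a, θ a ≠ 1) (l : {lam // lam ∈ TSet F n mu}) :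
    freeToTarget θ mu (∑ m, θ (pairF (dproj (Plast n) l.1) m) •
        Finsupp.single (lastColUnip m, dproj (Psub n) l.1) 1) =
      (Fintype.card (Matrix (Fin n) (Fin n) F) : ℂ) • fun l' => if l = l' then 1 else 0 := by
  ext l'
  simp only [map_sum, map_smul, Finset.sum_apply, Pi.smul_apply, smul_eq_mul,
    freeToTarget_single_lastColUnip l.2.2]
  have hsum : ∑ m, θ (pairF (dproj (Plast n) l.1) m) *
      (θ (-pairF (dproj (Plast n) l'.1) m) * extensionSum mu (dproj (Psub n) l.1) l') =
      extensionSum mu (dproj (Psub n) l.1) l' *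
        ∑ m, θ (pairF (dproj (Plast n) l.1 - dproj (Plast n) l'.1) m) := by
    rw [Finset.mul_sum]
    refine Finset.sum_congr rfl fun m _ => ?_
    rw [pairF_sub_left, sub_eq_add_neg, hθadd]
    ring
  rw [hsum, sum_theta_pairF hθadd hθ0 hθnt, extensionSum]
  by_cases hl : l = l'
  · subst hl
    simp
  · have : ¬ (dproj (Psub n) l'.1 = dproj (Psub n) l.1 ∧
        dproj (Plast n) l.1 - dproj (Plast n) l'.1 = 0) :=
      fun h => hl (Subtype.ext (TSet_ext l.2 l'.2 h.1.symm (sub_eq_zero.1 h.2)))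
    rw [if_neg hl, mul_zero]
    split_ifs <;> simp_all

lemma freeToTarget_surjective (hθadd : ∀ a b, θ (a + b) = θ a * θ b) (hθ0 : θ 0 = 1)
    (hθnt : ∃ a, θ a ≠ 1) : Function.Surjective (freeToTarget θ mu) := by
  rw [← LinearMap.range_eq_top, eq_top_iff]
  intro f _
  rw [pi_eq_sum_univ f]
  refine Submodule.sum_mem _ fun l _ => Submodule.smul_mem _ _
    ⟨(Fintype.card (Matrix (Fin n) (Fin n) F) : ℂ)⁻¹ •
      ∑ m, θ (pairF (dproj (Plast n) l.1) m) •
        Finsupp.single (lastColUnip m, dproj (Psub n) l.1) 1, ?_⟩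
  rw [map_smul, freeToTarget_sum_lastColUnip hθadd hθ0 hθnt l, smul_smul,
    inv_mul_cancel₀ (by simp), one_smul]

def indVec (θ : F → ℂ) (mu : Matrix (Fin n) (Fin n) F) (l : {lam // lam ∈ TSet F n mu}) :
    IndMod F n θ mu :=
  (RelMod F n θ mu).mkQ (Finsupp.single (lastColUnip l.1, dproj (Psub n) l.1) 1)

lemma indVec_add_dproj_Plast {ν : Matrix (Fin n) (Fin n) F} (hν : ν ∈ leftOrbit F (Psub n) mu)
    (m : Matrix (Fin n) (Fin n) F) :
    indVec θ mu ⟨ν + dproj (Plast n) m, add_dproj_Plast_mem_TSet hν m⟩ =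
      (RelMod F n θ mu).mkQ (Finsupp.single (lastColUnip m, ν) 1) := by
  have hν' := mem_patternSpace_of_mem_leftOrbit hν
  rw [indVec, lastColUnip, dproj_Plast_add_dproj_Plast_of_mem hν',
    dproj_Psub_add_dproj_Plast_of_mem hν', lastColUnip]

lemma mkQ_single_mem_span_indVec (p : Matrix (Fin n) (Fin n) F × Matrix (Fin n) (Fin n) F) :
    (RelMod F n θ mu).mkQ (Finsupp.single p 1) ∈
      Submodule.span ℂ (Set.range (indVec θ mu)) := by
  by_cases hp : p.1 ∈ patternGroup F (· < ·) ∧ p.2 ∈ leftOrbit F (Psub n) mu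
  swap
  · rw [Submodule.mkQ_apply, (Submodule.Quotient.mk_eq_zero (RelMod F n θ mu)).2
      (Submodule.subset_span (Or.inr ⟨p, hp, rfl⟩))]
    exact zero_mem _
  obtain ⟨g, ν⟩ := p
  obtain ⟨hg, hν⟩ := hp
  obtain ⟨h, hh, hgh⟩ := eq_lastColUnip_mul hg
  have hrel : (Finsupp.single (lastColUnip g * h, ν) 1 -
      θ (pairF ν (Ring.inverse h - 1)) • Finsupp.single (lastColUnip g, lact (Psub n) h ν) 1 :
        FreeW F n) ∈ RelMod F n θ mu :=
    Submodule.subset_span (Or.inl ⟨_, lastColUnip_mem g, h, hh, ν, hν, rfl⟩)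
  rw [← Submodule.Quotient.mk_eq_zero, Submodule.Quotient.mk_sub, Submodule.Quotient.mk_smul,
    sub_eq_zero, ← hgh] at hrel
  rw [Submodule.mkQ_apply, hrel, ← Submodule.mkQ_apply,
    ← indVec_add_dproj_Plast (lact_mem_leftOrbit hh hν) g]
  exact Submodule.smul_mem _ _ (Submodule.subset_span (Set.mem_range_self _))

lemma span_indVec : Submodule.span ℂ (Set.range (indVec θ mu)) = ⊤ := by
  refine Submodule.eq_top_iff'.2 fun z => ?_
  obtain ⟨w, rfl⟩ := Submodule.mkQ_surjective _ z
  induction w using Finsupp.induction_linear with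
  | zero => rw [map_zero]; exact zero_mem _
  | add f g hf hg => rw [map_add]; exact add_mem hf hg
  | single p c =>
    rw [← mul_one c, ← smul_eq_mul, ← Finsupp.smul_single, map_smul]
    exact Submodule.smul_mem _ _ (mkQ_single_mem_span_indVec p)

end InducedModule

theorem induced_supermodule_isomorphism_general
    {n : ℕ} (F : Type*) [Field F] [Fintype F]
    (θ : F → ℂ) (hθadd : ∀ a b, θ (a + b) = θ a * θ b)
    (hθne : ∀ a, θ a ≠ 0) (hθnt : ∃ a, θ a ≠ 1)
    (mu : Matrix (Fin n) (Fin n) F) :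
    ∃ φ : IndMod F n θ mu ≃ₗ[ℂ] ({lam // lam ∈ TSet F n mu} → ℂ),
      ∀ u ∈ patternGroup F (fun i j : Fin n => i < j), ∀ w : FreeW F n,
        φ ((RelMod F n θ mu).mkQ (freeAct F n u w)) =
          targetAct F n θ mu u (φ ((RelMod F n θ mu).mkQ w)) := by
  let Φ := (RelMod F n θ mu).liftQ (freeToTarget θ mu) (relMod_le_ker_freeToTarget hθadd)
  have hΦ : Function.Surjective Φ := by
    rw [← LinearMap.range_eq_top, Submodule.range_liftQ, LinearMap.range_eq_top]
    exact freeToTarget_surjective hθadd (theta_zero hθadd hθne) hθnt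
  have hΨ : Function.Surjective (Fintype.linearCombination ℂ (indVec θ mu)) :=
    (span_range_eq_top_iff_surjective_fintypeLinearCombination ℂ _).1 span_indVec
  have : Module.Finite ℂ (IndMod F n θ mu) := Module.Finite.of_surjective _ hΨ
  have hdim : Module.finrank ℂ (IndMod F n θ mu) =
      Module.finrank ℂ ({lam // lam ∈ TSet F n mu} → ℂ) :=
    le_antisymm (LinearMap.finrank_le_finrank_of_surjective hΨ)
      (LinearMap.finrank_le_finrank_of_surjective hΦ)
  exact ⟨LinearEquiv.ofBijective Φ
    ⟨(LinearMap.injective_iff_surjective_of_finrank_eq_finrank hdim).2 hΦ, hΦ⟩,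
    fun u hu w => freeToTarget_freeAct hθadd hu w⟩

theorem induced_supermodule_isomorphism
    {n : ℕ} (hn : 0 < n) (F : Type*) [Field F] [Fintype F]
    (θ : F → ℂ) (hθadd : ∀ a b, θ (a + b) = θ a * θ b)
    (hθne : ∀ a, θ a ≠ 0) (hθnt : ∃ a, θ a ≠ 1)
    (mu : Matrix (Fin n) (Fin n) F) (hmu : ∀ i j, mu i j ≠ 0 → Psub n i j) :
    ∃ φ : IndMod F n θ mu ≃ₗ[ℂ] ({lam // lam ∈ TSet F n mu} → ℂ),
      ∀ u ∈ patternGroup F (fun i j : Fin n => i < j), ∀ w : FreeW F n,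
        φ ((RelMod F n θ mu).mkQ (freeAct F n u w)) =
          targetAct F n θ mu u (φ ((RelMod F n θ mu).mkQ w)) :=
  induced_supermodule_isomorphism_general F θ hθadd hθne hθnt mu
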